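/- arXiv:1306.6321 — 2 statements merged into one kernel-verified Lean document; each statement's English description precedes it below -/
import Mathlib

section
/- Exact corrected information ratio for real weak values with Gaussian meter never exceeds one: for all θ_i, θ_f ∈ ℝ and G > 0, the quantity R = (1/2)[1 + cosθ_f cosθ_i − e^{−G/2} sinθ_f sinθ_i + G(1 + cosθ_f cosθ_i)/(1 + e^{G/2} cosec θ_f cosec θ_i (1 + cosθ_f cosθ_i))] satisfies R ≤ 1 (on the domain where sinθ_i sinθ_f > 0 so the expression is defined). -/
open Real

/-!
Write `s = sin θf sin θi > 0` and `A = 1 + cos θf cos θi ≥ 0`. The correction term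
`G A / (1 + e^{G/2} A / s)` is at most `G s e^{-G/2}`, so twice the ratio is at most
`A + (G - 1) e^{-G/2} s`. Since `G - 1 ≤ e^{G/2}`, this is at most `A + s = 1 + cos (θf - θi) ≤ 2`.
-/

theorem sub_one_le_exp_half (t : ℝ) : t - 1 ≤ exp (t / 2) := by
  rcases le_or_gt t 0 with ht | ht
  · linarith [exp_pos (t / 2)]
  · nlinarith [quadratic_le_exp_of_nonneg (half_pos ht).le, sq_nonneg (t / 2 - 1)]

theorem sub_one_mul_exp_neg_half_le_one (t : ℝ) : (t - 1) * exp (-(t / 2)) ≤ 1 := by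
  rw [exp_neg, ← div_eq_mul_inv, div_le_one (exp_pos _)]
  exact sub_one_le_exp_half t

theorem div_one_add_mul_div_le {A s x : ℝ} (hA : 0 ≤ A) (hs : 0 < s) (hx : 0 < x) :
    A / (1 + x * (1 / s) * A) ≤ s / x := by
  have hD : 1 + x * (1 / s) * A = (s + x * A) / s := by field_simp
  rw [hD, div_div_eq_mul_div, div_le_div_iff₀ (by positivity) hx]
  nlinarith [mul_nonneg hA hs.le]

/-- The exact corrected Fisher-information ratio for real weak values with a
Gaussian meter never exceeds one, for any pre- and postselection angles and
any measurement strength `G > 0` (on the domain where `sin θi · sin θf > 0`). -/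
theorem real_wva_ratio_le_one (θi θf G : ℝ) (hG : 0 < G)
    (hs : 0 < sin θi * sin θf) :
    (1/2) * (1 + cos θf * cos θi
        - exp (-(G/2)) * sin θf * sin θi
        + G * (1 + cos θf * cos θi) /
          (1 + exp (G/2) * (1 / sin θf) * (1 / sin θi)
            * (1 + cos θf * cos θi))) ≤ 1 := by
  set s := sin θf * sin θi with hs_def
  set A := 1 + cos θf * cos θi
  have hs_pos : 0 < s := by rwa [hs_def, mul_comm]
  have hA : 0 ≤ A := by
    nlinarith [neg_one_le_cos θf, neg_one_le_cos θi, cos_le_one θf, cos_le_one θi]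
  have hA_add_s : A + s ≤ 2 := by
    have := cos_le_one (θf - θi)
    rw [cos_sub] at this
    linarith
  have hcorr : G * A / (1 + exp (G / 2) * (1 / sin θf) * (1 / sin θi) * A)
      ≤ G * s * exp (-(G / 2)) := by
    calc G * A / (1 + exp (G / 2) * (1 / sin θf) * (1 / sin θi) * A)
        = G * (A / (1 + exp (G / 2) * (1 / s) * A)) := by rw [hs_def]; ring
      _ ≤ G * (s / exp (G / 2)) :=
        mul_le_mul_of_nonneg_left (div_one_add_mul_div_le hA hs_pos (exp_pos _)) hG.le
      _ = G * s * exp (-(G / 2)) := by rw [exp_neg]; ring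
  have hexp := mul_le_mul_of_nonneg_right (sub_one_mul_exp_neg_half_le_one G) hs_pos.le
  rw [mul_assoc (exp _), ← hs_def]
  linarith
end

section
/- Cramér–Rao-type consequence of postselection: under the AAV approximation with a Gaussian meter, the corrected weak-value-amplification Fisher information satisfies q F_g[P_wva] = |⟨f|A|i⟩|²/Δ_x² ≤ λ*²/Δ_x² = F_g[P_std], where equality in the first step uses F_g[P(x − Re(A_w)g)] = Re(A_w)²/Δ_x² and q = |⟨f|i⟩|². -/
/-!
The Fisher information of a location family `x ↦ p (x - ν g)` is `ν²` times that of `p`, and a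
Gaussian of width `Δ` has Fisher information `Δ² / Δ⁴ = 1 / Δ²` because its score is `-s / Δ²` and
its variance is `Δ²`. For a real weak value `A_w`, `|⟨f|i⟩|² A_w² = |⟨f|A|i⟩|²`, and
`|⟨f|A|i⟩| ≤ ‖A i‖ ≤ λ*` because a self-adjoint operator has norm equal to its spectral radius.
-/

open MeasureTheory

local notation "⟪" x ", " y "⟫" => @inner ℂ _ _ x y

/-- The centered Gaussian density with standard deviation `Δ`. -/
noncomputable def gaussianPDF (Δ s : ℝ) : ℝ :=
  (1 / (Real.sqrt (2 * Real.pi) * Δ)) * Real.exp (-(s ^ 2) / (2 * Δ ^ 2))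

theorem gaussianPDF_eq_gaussianPDFReal {Δ : ℝ} (hΔ : 0 ≤ Δ) :
    gaussianPDF Δ = ProbabilityTheory.gaussianPDFReal 0 (Δ ^ 2).toNNReal := by
  ext s
  rw [gaussianPDF, ProbabilityTheory.gaussianPDFReal_def, Real.coe_toNNReal _ (sq_nonneg Δ),
    Real.sqrt_mul' _ (sq_nonneg Δ), Real.sqrt_sq hΔ, one_div]
  simp only [sub_zero]

theorem integral_sq_mul_gaussianPDF {Δ : ℝ} (hΔ : 0 < Δ) :
    ∫ s, s ^ 2 * gaussianPDF Δ s = Δ ^ 2 := by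
  have hv : (Δ ^ 2).toNNReal ≠ 0 := (Real.toNNReal_pos.2 (by positivity)).ne'
  calc ∫ s, s ^ 2 * gaussianPDF Δ s
      = ∫ s, s ^ 2 ∂ProbabilityTheory.gaussianReal 0 (Δ ^ 2).toNNReal := by
        simp_rw [ProbabilityTheory.integral_gaussianReal_eq_integral_smul hv,
          gaussianPDF_eq_gaussianPDFReal hΔ.le, smul_eq_mul, mul_comm]
    _ = ProbabilityTheory.variance (fun s ↦ s)
          (ProbabilityTheory.gaussianReal 0 (Δ ^ 2).toNNReal) :=
        (ProbabilityTheory.variance_of_integral_eq_zero aemeasurable_id'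
          ProbabilityTheory.integral_id_gaussianReal).symm
    _ = Δ ^ 2 := by
        rw [ProbabilityTheory.variance_fun_id_gaussianReal, Real.coe_toNNReal _ (sq_nonneg Δ)]

theorem hasDerivAt_gaussianPDF {Δ : ℝ} (s : ℝ) :
    HasDerivAt (gaussianPDF Δ) (-(s / Δ ^ 2) * gaussianPDF Δ s) s := by
  have hexp : HasDerivAt (fun s : ℝ => -(s ^ 2) / (2 * Δ ^ 2)) (-(2 * s) / (2 * Δ ^ 2)) s := by
    simpa using ((hasDerivAt_pow 2 s).neg).div_const (2 * Δ ^ 2)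
  refine ((hexp.exp).const_mul (1 / (Real.sqrt (2 * Real.pi) * Δ))).congr_deriv ?_
  unfold gaussianPDF
  field_simp

theorem integral_sq_deriv_gaussianPDF_div {Δ : ℝ} (hΔ : 0 < Δ) :
    ∫ s, deriv (gaussianPDF Δ) s ^ 2 / gaussianPDF Δ s = 1 / Δ ^ 2 := by
  have hpos : ∀ s, 0 < gaussianPDF Δ s := fun s => by
    rw [gaussianPDF_eq_gaussianPDFReal hΔ.le]
    exact ProbabilityTheory.gaussianPDFReal_pos _ _ _ (Real.toNNReal_pos.2 (by positivity)).ne'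
  have hscore : ∀ s, deriv (gaussianPDF Δ) s ^ 2 / gaussianPDF Δ s
      = 1 / Δ ^ 4 * (s ^ 2 * gaussianPDF Δ s) := fun s => by
    rw [(hasDerivAt_gaussianPDF s).deriv]
    field_simp [(hpos s).ne']
  simp_rw [hscore]
  rw [integral_const_mul, integral_sq_mul_gaussianPDF hΔ]
  field_simp

theorem integral_sq_deriv_comp_sub_mul_div {p : ℝ → ℝ} (hp : Differentiable ℝ p) (ν g : ℝ) :
    ∫ x, (deriv (fun g' => p (x - ν * g')) g) ^ 2 / p (x - ν * g)
      = ν ^ 2 * ∫ s, deriv p s ^ 2 / p s := by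
  have hchain : ∀ x, deriv (fun g' => p (x - ν * g')) g = -ν * deriv p (x - ν * g) := fun x => by
    have hlin : HasDerivAt (fun g' : ℝ => x - ν * g') (-ν) g := by
      simpa using ((hasDerivAt_id g).const_mul ν).const_sub x
    exact ((hp _).hasDerivAt.comp g hlin).deriv.trans (mul_comm _ _)
  simp_rw [hchain, mul_pow, neg_sq, mul_div_assoc]
  rw [integral_const_mul,
    integral_sub_right_eq_self (fun s => deriv p s ^ 2 / p s) (ν * g)]

theorem integral_sq_deriv_gaussianPDF_comp_sub_mul_div {Δ : ℝ} (hΔ : 0 < Δ) (ν g : ℝ) :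
    ∫ x, (deriv (fun g' => gaussianPDF Δ (x - ν * g')) g) ^ 2 / gaussianPDF Δ (x - ν * g)
      = ν ^ 2 / Δ ^ 2 := by
  rw [integral_sq_deriv_comp_sub_mul_div (fun s => (hasDerivAt_gaussianPDF s).differentiableAt),
    integral_sq_deriv_gaussianPDF_div hΔ, mul_one_div]

theorem LinearMap.IsSymmetric.norm_apply_le {𝕜 E : Type*} [RCLike 𝕜] [NormedAddCommGroup E]
    [InnerProductSpace 𝕜 E] [FiniteDimensional 𝕜 E] {T : E →ₗ[𝕜] E} (hT : T.IsSymmetric)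
    {r : ℝ} (hr : 0 ≤ r) (hspec : ∀ μ ∈ spectrum 𝕜 T, ‖μ‖ ≤ r) (x : E) : ‖T x‖ ≤ r * ‖x‖ := by
  have := FiniteDimensional.complete 𝕜 E
  set T' := Module.End.toContinuousLinearMap E T
  have hT' : IsSelfAdjoint T' := ContinuousLinearMap.isSelfAdjoint_iff_isSymmetric.2 hT
  have hnorm : ‖T'‖ ≤ r := by
    have : spectralRadius 𝕜 T' ≤ ENNReal.ofReal r := by
      refine iSup₂_le fun μ hμ => ?_
      rw [AlgEquiv.spectrum_eq] at hμ
      rw [← norm_toNNReal]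
      exact ENNReal.coe_le_coe.2 (Real.toNNReal_le_toNNReal (hspec μ hμ))
    rw [T'.spectralRadius_eq_nnnorm hT'] at this
    exact (Real.le_toNNReal_iff_coe_le hr).1 (ENNReal.coe_le_coe.1 this)
  exact (T'.le_opNorm x).trans (by gcongr)

theorem sq_norm_eq_sq_re_div_mul_sq_norm {z w : ℂ} (hw : w ≠ 0) (hreal : (z / w).im = 0) :
    ‖z‖ ^ 2 = (z / w).re ^ 2 * ‖w‖ ^ 2 := by
  conv_lhs => rw [← div_mul_cancel₀ z hw]
  rw [norm_mul, mul_pow, ← Complex.abs_re_eq_norm.2 hreal, sq_abs]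

/-- Under the AAV approximation with a Gaussian meter of width `Δ`, the
postselection-corrected weak-value-amplification Fisher information satisfies
`q F_g[P_wva] = |⟨f|A|i⟩|²/Δ² ≤ λ*²/Δ² = F_g[P_std]`, where the WVA family is
shifted by `Re(A_w)·g` with `A_w = ⟨f|A|i⟩/⟨f|i⟩` real, `q = |⟨f|i⟩|²`, and
the standard family is shifted by `λ*·g`. -/
theorem wva_no_advantage_gaussian {n : ℕ}
    (A : EuclideanSpace ℂ (Fin n) →ₗ[ℂ] EuclideanSpace ℂ (Fin n))
    (hA : LinearMap.IsSymmetric A) (lam Δ : ℝ) (hΔ : 0 < Δ)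
    (hlam : IsGreatest {r : ℝ | ∃ μ ∈ spectrum ℂ A, ‖μ‖ = r} lam)
    (i f : EuclideanSpace ℂ (Fin n)) (hi : ‖i‖ = 1) (hf : ‖f‖ = 1)
    (hfi : ⟪f, i⟫ ≠ 0)
    (hreal : (⟪f, A i⟫ / ⟪f, i⟫).im = 0) :
    ∀ g : ℝ,
      ‖⟪f, i⟫‖ ^ 2 *
        (∫ x, (deriv (fun g' =>
            gaussianPDF Δ (x - (⟪f, A i⟫ / ⟪f, i⟫).re * g')) g) ^ 2
          / gaussianPDF Δ (x - (⟪f, A i⟫ / ⟪f, i⟫).re * g))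
        = ‖⟪f, A i⟫‖ ^ 2 / Δ ^ 2 ∧
      ‖⟪f, A i⟫‖ ^ 2 / Δ ^ 2 ≤ lam ^ 2 / Δ ^ 2 ∧
      lam ^ 2 / Δ ^ 2
        = ∫ x, (deriv (fun g' => gaussianPDF Δ (x - lam * g')) g) ^ 2
            / gaussianPDF Δ (x - lam * g) := by
  intro g
  have hlam_nonneg : 0 ≤ lam := by
    obtain ⟨μ, -, rfl⟩ := hlam.1
    exact norm_nonneg μ
  have hAi : ‖⟪f, A i⟫‖ ≤ lam :=
    calc ‖⟪f, A i⟫‖ ≤ ‖f‖ * ‖A i‖ := norm_inner_le_norm f (A i)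
      _ ≤ 1 * (lam * ‖i‖) := by
        rw [hf]
        gcongr
        exact hA.norm_apply_le hlam_nonneg (fun μ hμ => hlam.2 ⟨μ, hμ, rfl⟩) i
      _ = lam := by rw [hi, one_mul, mul_one]
  refine ⟨?_, by gcongr, (integral_sq_deriv_gaussianPDF_comp_sub_mul_div hΔ lam g).symm⟩
  rw [integral_sq_deriv_gaussianPDF_comp_sub_mul_div hΔ,
    sq_norm_eq_sq_re_div_mul_sq_norm hfi hreal]
  ring
end
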